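/- For a nontrivial finite simple graph G, the bondage number b(G) is at most b_2(G) = min { d(x) + d(y) - 1 - |N(x) ∩ N(y)| : xy ∈ E(G) }. -/

import Mathlib

open SimpleGraph

/-- The domination number of a graph: minimum size of a dominating set. -/
noncomputable def dominationNumber {V : Type*} (G : SimpleGraph V) : ℕ :=
  sInf {n | ∃ D : Finset V, (∀ v, v ∉ D → ∃ u ∈ D, G.Adj u v) ∧ D.card = n}

/-- The bondage number: minimum number of edges whose removal increases the
domination number. -/
noncomputable def bondageNumber {V : Type*} (G : SimpleGraph V) : ℕ :=
  sInf {n | ∃ B : Finset (Sym2 V), ↑B ⊆ G.edgeSet ∧ B.card = n ∧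
    dominationNumber G < dominationNumber (G.deleteEdges ↑B)}

/-- b₂(G) = min over edges xy of d(x) + d(y) - 1 - |N(x) ∩ N(y)|. -/
noncomputable def bTwo {V : Type*} [Fintype V] [DecidableEq V] (G : SimpleGraph V)
    [DecidableRel G.Adj] : ℕ :=
  sInf {n | ∃ x y : V, G.Adj x y ∧
    n = G.degree x + G.degree y - 1 - (G.neighborFinset x ∩ G.neighborFinset y).card}

/-!
Pick an edge `xy` realising `b₂(G)`. Delete every edge at `x`, together with the edges from `y`
to vertices outside the closed neighbourhood of `x`; these are
`d(x) + d(y) - 1 - |N(x) ∩ N(y)|` edges. In the resulting graph `x` is isolated, so a minimum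
dominating set `D` contains `x`. Removing `x` from `D` leaves a dominating set of `G`: a vertex
dominated only by `x` in the new graph is dominated by something else in `G`, and `x` itself is
dominated in `G` either by `y ∈ D` or by the vertex of `D` dominating `y`, which is a neighbour
of `x`. Hence the domination number went up.
-/

open Finset

namespace SimpleGraph

variable {V : Type*}

def IsDominating (G : SimpleGraph V) (D : Finset V) : Prop :=
  ∀ v, v ∉ D → ∃ u ∈ D, G.Adj u v

lemma dominationNumber_le_card {G : SimpleGraph V} {D : Finset V} (hD : G.IsDominating D) :
    dominationNumber G ≤ #D := by
  unfold dominationNumber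
  exact Nat.sInf_le ⟨D, hD, rfl⟩

lemma exists_isDominating_card_eq_dominationNumber [Finite V] (G : SimpleGraph V) :
    ∃ D : Finset V, G.IsDominating D ∧ #D = dominationNumber G := by
  have := Fintype.ofFinite V
  have hne : {n | ∃ D : Finset V, G.IsDominating D ∧ #D = n}.Nonempty :=
    ⟨_, univ, fun v hv => absurd (mem_univ v) hv, rfl⟩
  exact Nat.sInf_mem hne

lemma bondageNumber_le_card {G : SimpleGraph V} {B : Finset (Sym2 V)} (hB : ↑B ⊆ G.edgeSet)
    (hlt : dominationNumber G < dominationNumber (G.deleteEdges ↑B)) :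
    bondageNumber G ≤ #B := by
  unfold bondageNumber
  exact Nat.sInf_le ⟨B, hB, rfl, hlt⟩

lemma dominationNumber_lt_of_le [Finite V] {G G' : SimpleGraph V} (hle : G' ≤ G) {x y : V}
    (hxy : G.Adj x y) (hx : ∀ u, ¬ G'.Adj u x) (hy : ∀ u, G'.Adj u y → G.Adj u x) :
    dominationNumber G < dominationNumber G' := by
  classical
  obtain ⟨D, hD, hcard⟩ := exists_isDominating_card_eq_dominationNumber G'
  have hxD : x ∈ D := by
    by_contra hxD
    obtain ⟨u, -, hu⟩ := hD x hxD
    exact hx u hu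
  have hdom : G.IsDominating (D.erase x) := by
    intro v hv
    by_cases hvx : v = x
    · subst hvx
      by_cases hyD : y ∈ D
      · exact ⟨y, mem_erase.2 ⟨hxy.ne', hyD⟩, hxy.symm⟩
      · obtain ⟨u, huD, hu⟩ := hD y hyD
        have hux := hy u hu
        exact ⟨u, mem_erase.2 ⟨hux.ne, huD⟩, hux⟩
    · obtain ⟨u, huD, hu⟩ := hD v fun h => hv (mem_erase.2 ⟨hvx, h⟩)
      have hux : u ≠ x := by
        rintro rfl
        exact hx v hu.symm
      exact ⟨u, mem_erase.2 ⟨hux, huD⟩, hle hu⟩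
  have := dominationNumber_le_card hdom
  rw [card_erase_of_mem hxD, hcard] at this
  have : 0 < #D := card_pos.2 ⟨x, hxD⟩
  omega

variable [Fintype V] [DecidableEq V] (G : SimpleGraph V) [DecidableRel G.Adj]

lemma exists_adj_bTwo_eq (hG : G.edgeSet.Nonempty) :
    ∃ x y, G.Adj x y ∧
      bTwo G = G.degree x + G.degree y - 1 - #(G.neighborFinset x ∩ G.neighborFinset y) := by
  obtain ⟨a, b, hab⟩ := G.ne_bot_iff_exists_adj.1 (edgeSet_nonempty.1 hG)
  have hne : {n | ∃ x y : V, G.Adj x y ∧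
      n = G.degree x + G.degree y - 1 - #(G.neighborFinset x ∩ G.neighborFinset y)}.Nonempty :=
    ⟨_, a, b, hab, rfl⟩
  exact Nat.sInf_mem hne

def isolatingEdgeFinset (x y : V) : Finset (Sym2 V) :=
  G.incidenceFinset x ∪
    ((G.neighborFinset y \ G.neighborFinset x).erase x).image (fun z => s(y, z))

variable {G}

lemma isolatingEdgeFinset_subset_edgeSet (x y : V) :
    ↑(G.isolatingEdgeFinset x y) ⊆ G.edgeSet := by
  intro e he
  simp only [isolatingEdgeFinset, coe_union, Set.mem_union, mem_coe, mem_incidenceFinset,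
    mem_image, mem_erase, mem_sdiff, mem_neighborFinset] at he
  rcases he with he | ⟨z, ⟨-, hyz, -⟩, rfl⟩
  · exact he.1
  · exact hyz

lemma card_isolatingEdgeFinset {x y : V} (hxy : G.Adj x y) :
    #(G.isolatingEdgeFinset x y) =
      G.degree x + G.degree y - 1 - #(G.neighborFinset x ∩ G.neighborFinset y) := by
  have hdisj : Disjoint (G.incidenceFinset x)
      (((G.neighborFinset y \ G.neighborFinset x).erase x).image (fun z => s(y, z))) := by
    rw [Finset.disjoint_left]
    rintro e he he'
    obtain ⟨z, hz, rfl⟩ := mem_image.1 he'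
    rcases Sym2.mem_iff.1 ((mem_incidenceFinset _ _ _).1 he).2 with rfl | rfl
    · exact hxy.ne rfl
    · exact (mem_erase.1 hz).1 rfl
  have hinj : Function.Injective (fun z : V => s(y, z)) := fun _ _ => Sym2.congr_right.1
  have hx : x ∈ G.neighborFinset y \ G.neighborFinset x := by simpa using hxy.symm
  have hpos := card_pos.2 ⟨x, hx⟩
  rw [card_sdiff, card_neighborFinset_eq_degree] at hpos
  rw [isolatingEdgeFinset, card_union_of_disjoint hdisj, card_incidenceFinset_eq_degree,
    card_image_of_injective _ hinj, card_erase_of_mem hx, card_sdiff,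
    card_neighborFinset_eq_degree]
  omega

lemma dominationNumber_lt_deleteEdges_isolatingEdgeFinset {x y : V} (hxy : G.Adj x y) :
    dominationNumber G < dominationNumber (G.deleteEdges ↑(G.isolatingEdgeFinset x y)) := by
  refine dominationNumber_lt_of_le (deleteEdges_le _) hxy (fun u hu => ?_) (fun u hu => ?_)
  · refine (deleteEdges_adj.1 hu).2 (mem_union_left _ ?_)
    exact (mem_incidenceFinset _ _ _).2 ⟨(deleteEdges_adj.1 hu).1, Sym2.mem_mk_right u x⟩
  · obtain ⟨huy, hnot⟩ := deleteEdges_adj.1 hu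
    by_contra hux
    refine hnot (mem_union_right _ (mem_image.2 ⟨u, ?_, Sym2.eq_swap⟩))
    have hne : u ≠ x := by
      rintro rfl
      exact hnot (mem_union_left _ ((mem_incidenceFinset _ _ _).2 ⟨hxy, Sym2.mem_mk_left _ _⟩))
    simpa [hne, huy.symm] using fun h => hux h.symm

end SimpleGraph

theorem bondage_le_bTwo {V : Type*} [Fintype V] [DecidableEq V] (G : SimpleGraph V)
    [DecidableRel G.Adj] (hG : G.edgeSet.Nonempty) :
    bondageNumber G ≤ bTwo G := by
  obtain ⟨x, y, hxy, hb⟩ := G.exists_adj_bTwo_eq hG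
  rw [hb, ← card_isolatingEdgeFinset hxy]
  exact bondageNumber_le_card (isolatingEdgeFinset_subset_edgeSet x y)
    (dominationNumber_lt_deleteEdges_isolatingEdgeFinset hxy)
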